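/- Let F be the class of functions on [0,1) defined in the context (finite linear combinations of the dyadic indicator system with level-wise coefficient constraint (ℓ+1)^{−2}·(log(ℓ+e))^{−2}). Then (i) there are C > 0 and N ∈ ℕ such that d_n(F) ≤ C · n^{−1/2} · (log n)^{−1} · (log log n)^{−1} for all n ≥ N, so in particular ∑_n d_n(F)² · log n < ∞; and (ii) g_n(F) ≥ 1 for all n ∈ ℕ₀. In particular, the bound of the form g_{cm}(F)² ≤ (1/m)∑_{k≥m} d_k(F)² that holds for unit balls of RKHSs fails for general classes satisfying Assumption A, and the condition ((log k)^{1/2} d_k(F)) ∈ ℓ₂ does not imply g_n(F) → 0. -/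

import Mathlib

/-!
Statement 16 (Example): Let `F` be the class of finite linear combinations
`f_c = ∑_{ℓ,k} c_{ℓ,k} χ_{ℓ,k}` of the dyadic indicator system on `[0,1)` with
level-wise coefficient constraint
`∑_{k=1}^{2^ℓ} |c_{ℓ,k}|² ≤ (ℓ+1)^{−2} (log(ℓ+e))^{−2}`.  Then
(i) there are `C > 0` and `N ∈ ℕ` with
    `d_n(F) ≤ C n^{−1/2} (log n)^{−1} (log log n)^{−1}` for all `n ≥ N`,
    so in particular `∑_n d_n(F)² · log n < ∞`; and
(ii) `g_n(F) ≥ 1` for all `n ∈ ℕ₀`.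
-/

open MeasureTheory ENNReal

noncomputable section

/-- The unit interval `[0,1)` as a subtype of `ℝ`. -/
abbrev UnitIco : Type := Set.Ico (0 : ℝ) 1

/-- Lebesgue measure on `[0,1)`. -/
def μ01 : Measure UnitIco := MeasureTheory.Measure.comap Subtype.val volume

/-- Sampling numbers in `L₂(μ)`. -/
def sampNum {D : Type*} [MeasurableSpace D] (μ : Measure D)
    (F : Set (D → ℂ)) (n : ℕ) : ℝ≥0∞ :=
  ⨅ (x : Fin n → D) (φ : Fin n → D → ℂ) (_ : ∀ i, MemLp (φ i) 2 μ),
    ⨆ f ∈ F, eLpNorm (fun t => f t - ∑ i, f (x i) * φ i t) 2 μ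

/-- Kolmogorov widths in `L₂(μ)`. -/
def kolW {D : Type*} [MeasurableSpace D] (μ : Measure D)
    (F : Set (D → ℂ)) (k : ℕ) : ℝ≥0∞ :=
  ⨅ (ℓ : Fin k → (D → ℂ) → ℂ) (φ : Fin k → D → ℂ) (_ : ∀ i, MemLp (φ i) 2 μ),
    ⨆ f ∈ F, eLpNorm (fun t => f t - ∑ i, ℓ i f * φ i t) 2 μ

/-- `χ ℓ k` is the indicator function of the dyadic interval
`I_{ℓ,k} = [(k−1) 2^{−ℓ}, k 2^{−ℓ}) ⊂ [0,1)`. -/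
def dyadicChi (ℓ k : ℕ) : UnitIco → ℂ := fun x =>
  if ((k : ℝ) - 1) / 2 ^ ℓ ≤ (x : ℝ) ∧ (x : ℝ) < (k : ℝ) / 2 ^ ℓ then 1 else 0

/-- The class `F`: all finite linear combinations `f_c = ∑_{ℓ,k} c_{ℓ,k} χ_{ℓ,k}`
with `∑_{k=1}^{2^ℓ} |c_{ℓ,k}|² ≤ (ℓ+1)^{−2} (log(ℓ+e))^{−2}` for all `ℓ ∈ ℕ₀`. -/
def F16 : Set (UnitIco → ℂ) :=
  { f | ∃ c : ℕ → ℕ → ℂ,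
      (∀ ℓ : ℕ, ∑ k ∈ Finset.Icc 1 (2 ^ ℓ), ‖c ℓ k‖ ^ 2 ≤
        ((ℓ : ℝ) + 1) ^ (-(2 : ℝ)) * Real.log ((ℓ : ℝ) + Real.exp 1) ^ (-(2 : ℝ))) ∧
      {q : ℕ × ℕ | c q.1 q.2 ≠ 0}.Finite ∧
      f = fun x => ∑' ℓ : ℕ, ∑ k ∈ Finset.Icc 1 (2 ^ ℓ), c ℓ k * dyadicChi ℓ k x }

/-!
The level-`ℓ` block of `f_c` is constant on the dyadic intervals of length `2^{-ℓ}`, so its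
`L₂` norm is at most `2^{-ℓ/2} w_ℓ` with `w_ℓ = ((ℓ+1) log(ℓ+e))⁻¹`. The blocks of level `≤ L`
lie in the span of the `2^L` indicators of level `L`; projecting onto them leaves a geometric
tail of size `≲ 2^{-L/2} w_{L+1}`, and `L = ⌊log₂ n⌋` gives (i). Cauchy condensation, applied
twice, turns `∑ d_n² log n` into the Bertrand series `∑ 1/((ℓ+1) log²(ℓ+e))`.

For (ii), `∑ w_ℓ = ∞`, so for given points `x_1, …, x_n` there are levels `L₀ ≤ ℓ < M` with
`T = ∑ w_ℓ ≥ √n`. Subtracting `w_ℓ / T` from the constant `1` on each of the at most `n`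
intervals of level `ℓ` containing a point respects the budget `n (w_ℓ/T)² ≤ w_ℓ²`, makes the
function vanish at every `x_i`, and changes it only on a set of measure `≤ n 2^{1-L₀}`.
A sampling algorithm sees only zeros, so its error is at least `‖f‖₂ ≈ 1`.
-/

open Finset

/-- The dyadic interval of level `ℓ` containing `t` is `I_{ℓ, dyadicIdx ℓ t + 1}`. -/
def dyadicIdx (ℓ : ℕ) (t : UnitIco) : ℕ := ⌊(2 : ℝ) ^ ℓ * t⌋₊

lemma dyadicIdx_lt (ℓ : ℕ) (t : UnitIco) : dyadicIdx ℓ t < 2 ^ ℓ := by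
  rw [dyadicIdx, Nat.floor_lt (by have := t.2.1; positivity)]
  push_cast
  exact mul_lt_of_lt_one_right (by positivity) t.2.2

lemma dyadicIdx_zero (t : UnitIco) : dyadicIdx 0 t = 0 := by
  simpa using dyadicIdx_lt 0 t

lemma dyadicChi_apply (ℓ k : ℕ) (t : UnitIco) :
    dyadicChi ℓ k t = if k = dyadicIdx ℓ t + 1 then 1 else 0 := by
  have h2 : (0 : ℝ) < 2 ^ ℓ := by positivity
  rcases Nat.eq_zero_or_eq_succ_pred k with rfl | hk
  · simpa [dyadicChi] using fun _ => t.2.1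
  · have key : ((k : ℝ) - 1) / 2 ^ ℓ ≤ t ∧ (t : ℝ) < k / 2 ^ ℓ ↔ dyadicIdx ℓ t = k - 1 := by
      rw [dyadicIdx, Nat.floor_eq_iff (by have := t.2.1; positivity), div_le_iff₀ h2,
        lt_div_iff₀ h2, Nat.cast_sub (by omega)]
      push_cast
      constructor <;> rintro ⟨h, h'⟩ <;> constructor <;> linarith
    simp only [dyadicChi, key, show dyadicIdx ℓ t = k - 1 ↔ k = dyadicIdx ℓ t + 1 by omega]

lemma sum_Icc_mul_dyadicChi (ℓ : ℕ) (d : ℕ → ℂ) (t : UnitIco) :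
    ∑ k ∈ Icc 1 (2 ^ ℓ), d k * dyadicChi ℓ k t = d (dyadicIdx ℓ t + 1) := by
  simp only [dyadicChi_apply, mul_ite, mul_one, mul_zero, sum_ite_eq', mem_Icc]
  rw [if_pos ⟨by omega, dyadicIdx_lt ℓ t⟩]

lemma dyadicIdx_eq_div {ℓ L : ℕ} (h : ℓ ≤ L) (t : UnitIco) :
    dyadicIdx ℓ t = dyadicIdx L t / 2 ^ (L - ℓ) := by
  have : (2 : ℝ) ^ ℓ * t = 2 ^ L * t / ((2 ^ (L - ℓ) : ℕ) : ℝ) := by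
    rw [_root_.eq_div_iff (by positivity)]
    push_cast
    rw [mul_right_comm, ← pow_add, Nat.add_sub_cancel' h]
  rw [dyadicIdx, this, Nat.floor_div_natCast, dyadicIdx]

lemma measurable_dyadicIdx (ℓ : ℕ) : Measurable (dyadicIdx ℓ) :=
  Nat.measurable_floor.comp (measurable_const.mul measurable_subtype_coe)

lemma measurableEmbedding_unitIco : MeasurableEmbedding (Subtype.val : UnitIco → ℝ) :=
  MeasurableEmbedding.subtype_coe measurableSet_Ico

instance : IsProbabilityMeasure μ01 where
  measure_univ := by
    rw [μ01, measurableEmbedding_unitIco.comap_apply, Set.image_univ, Subtype.range_coe,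
      Real.volume_Ico]
    simp

lemma μ01_dyadicIdx_eq_le (ℓ j : ℕ) :
    μ01 {t | dyadicIdx ℓ t = j} ≤ ENNReal.ofReal (2⁻¹ ^ ℓ) := by
  have h2 : (0 : ℝ) < 2 ^ ℓ := by positivity
  have hsub : {t | dyadicIdx ℓ t = j} ⊆
      Subtype.val ⁻¹' Set.Ico ((j : ℝ) / 2 ^ ℓ) ((j + 1) / 2 ^ ℓ) := by
    intro t ht
    obtain ⟨h, h'⟩ := (Nat.floor_eq_iff (by have := t.2.1; positivity)).mp ht
    rw [Set.mem_preimage, Set.mem_Ico, div_le_iff₀ h2, lt_div_iff₀ h2]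
    constructor <;> linarith
  calc μ01 {t | dyadicIdx ℓ t = j}
      ≤ volume (Set.Ico ((j : ℝ) / 2 ^ ℓ) ((j + 1) / 2 ^ ℓ)) := by
        rw [μ01, measurableEmbedding_unitIco.comap_apply]
        exact measure_mono ((Set.image_mono hsub).trans (Set.image_preimage_subset _ _))
    _ = ENNReal.ofReal (2⁻¹ ^ ℓ) := by
        rw [Real.volume_Ico, ← sub_div, add_sub_cancel_left, one_div, inv_pow]

lemma eLpNorm_comp_dyadicIdx_sq_le (ℓ : ℕ) (g : ℕ → ℂ) :
    eLpNorm (fun t => g (dyadicIdx ℓ t)) 2 μ01 ^ 2 ≤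
      ENNReal.ofReal ((∑ j ∈ range (2 ^ ℓ), ‖g j‖ ^ 2) * 2⁻¹ ^ ℓ) := by
  have hcell : ∀ j, MeasurableSet {t | dyadicIdx ℓ t = j} :=
    fun j => measurable_dyadicIdx ℓ (measurableSet_singleton j)
  have hpt : ∀ t, ‖g (dyadicIdx ℓ t)‖ₑ ^ (2 : ℝ) = ∑ j ∈ range (2 ^ ℓ),
      {t | dyadicIdx ℓ t = j}.indicator (fun _ => ‖g j‖ₑ ^ (2 : ℝ)) t := by
    intro t
    rw [sum_eq_single_of_mem _ (mem_range.mpr (dyadicIdx_lt ℓ t))]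
    · exact (Set.indicator_of_mem (s := {t | dyadicIdx ℓ t = dyadicIdx ℓ t}) rfl
        (fun _ => ‖g (dyadicIdx ℓ t)‖ₑ ^ (2 : ℝ))).symm
    · exact fun j _ hj => Set.indicator_of_notMem (s := {t | dyadicIdx ℓ t = j}) (Ne.symm hj) _
  have h := eLpNorm_nnreal_pow_eq_lintegral (f := fun t => g (dyadicIdx ℓ t)) (μ := μ01)
    (p := 2) two_ne_zero
  simp only [NNReal.coe_ofNat, ENNReal.coe_ofNat] at h
  rw [← ENNReal.rpow_natCast, Nat.cast_ofNat, h, lintegral_congr hpt,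
    lintegral_finsetSum _ fun j _ => measurable_const.indicator (hcell j),
    ENNReal.ofReal_mul (by positivity), ENNReal.ofReal_sum_of_nonneg fun j _ => by positivity,
    sum_mul]
  refine sum_le_sum fun j _ => ?_
  rw [lintegral_indicator_const (hcell j), ENNReal.ofReal_pow (norm_nonneg _),
    ofReal_norm, ← ENNReal.rpow_natCast, Nat.cast_ofNat]
  gcongr
  exact μ01_dyadicIdx_eq_le ℓ j

lemma one_le_log_add_exp {x : ℝ} (hx : 0 ≤ x) : 1 ≤ Real.log (x + Real.exp 1) := by
  rw [Real.le_log_iff_exp_le (by positivity)]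
  linarith

/-- The square root of the level-`ℓ` coefficient budget of `F16`. -/
def levelWeight (ℓ : ℕ) : ℝ := (((ℓ : ℝ) + 1) * Real.log (ℓ + Real.exp 1))⁻¹

lemma levelWeight_pos (ℓ : ℕ) : 0 < levelWeight ℓ := by
  have := one_le_log_add_exp ℓ.cast_nonneg
  unfold levelWeight
  positivity

lemma levelWeight_antitone : Antitone levelWeight := by
  intro m n hmn
  have hmn' : (m : ℝ) ≤ n := by exact_mod_cast hmn
  have := one_le_log_add_exp m.cast_nonneg
  unfold levelWeight
  gcongr

lemma rpow_neg_two_mul_rpow_neg_two_eq_levelWeight_sq (ℓ : ℕ) :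
    ((ℓ : ℝ) + 1) ^ (-(2 : ℝ)) * Real.log ((ℓ : ℝ) + Real.exp 1) ^ (-(2 : ℝ)) =
      levelWeight ℓ ^ 2 := by
  rw [Real.rpow_neg (by positivity), Real.rpow_neg (by linarith [one_le_log_add_exp ℓ.cast_nonneg]),
    levelWeight, inv_pow, mul_pow, mul_inv]
  norm_cast

lemma log_two_pow_add_exp_le (k : ℕ) : Real.log (2 ^ k + Real.exp 1) ≤ k + 2 := by
  have hk : (2 : ℝ) ^ k + Real.exp 1 ≤ 2 ^ (k + 2) := by
    have := Real.exp_one_lt_d9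
    have : (1 : ℝ) ≤ 2 ^ k := one_le_pow₀ one_le_two
    rw [pow_add]
    linarith
  calc Real.log (2 ^ k + Real.exp 1) ≤ Real.log (2 ^ (k + 2)) :=
        Real.log_le_log (by positivity) hk
    _ = (k + 2) * Real.log 2 := by rw [Real.log_pow]; push_cast; ring
    _ ≤ k + 2 := mul_le_of_le_one_right (by positivity)
        (Real.log_two_lt_d9.le.trans (by norm_num))

lemma le_log_two_pow_add_exp (k : ℕ) : ((k : ℝ) + 1) / 3 ≤ Real.log (2 ^ k + Real.exp 1) := by
  have h1 := one_le_log_add_exp (pow_nonneg zero_le_two k : (0 : ℝ) ≤ 2 ^ k)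
  have h2 : k * Real.log 2 ≤ Real.log (2 ^ k + Real.exp 1) := by
    rw [← Real.log_pow]
    exact Real.log_le_log (by positivity) (by linarith [Real.exp_pos 1])
  nlinarith [Real.log_two_gt_d9, (k.cast_nonneg : (0 : ℝ) ≤ k)]

lemma not_summable_levelWeight : ¬ Summable levelWeight := by
  rw [← summable_condensed_iff_of_nonneg (fun ℓ => (levelWeight_pos ℓ).le)
    fun m n _ h => levelWeight_antitone h]
  intro hsum
  have hlow : ∀ k : ℕ, (2 : ℝ)⁻¹ * ((k + 2 : ℕ) : ℝ)⁻¹ ≤ 2 ^ k * levelWeight (2 ^ k) := by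
    intro k
    have hlog := log_two_pow_add_exp_le k
    have hpos : 0 < Real.log (2 ^ k + Real.exp 1) := by linarith [le_log_two_pow_add_exp k]
    have h1 : (1 : ℝ) ≤ 2 ^ k := one_le_pow₀ one_le_two
    rw [levelWeight, ← mul_inv]
    push_cast
    rw [← div_eq_mul_inv, le_div_iff₀ (by positivity)]
    calc (2 * ((k : ℝ) + 2))⁻¹ * ((2 ^ k + 1) * Real.log (2 ^ k + Real.exp 1))
        ≤ (2 * ((k : ℝ) + 2))⁻¹ * ((2 * 2 ^ k) * (k + 2)) := by gcongr; linarith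
      _ = 2 ^ k := by field_simp
  have h : Summable fun k : ℕ => ((k + 2 : ℕ) : ℝ)⁻¹ := by
    simpa [← mul_assoc] using (hsum.of_nonneg_of_le (fun k => by positivity) hlow).mul_left 2
  exact Real.not_summable_natCast_inv ((summable_nat_add_iff 2).mp h)

lemma succ_mul_levelWeight_sq (ℓ : ℕ) :
    ((ℓ : ℝ) + 1) * levelWeight ℓ ^ 2 = (((ℓ : ℝ) + 1) * Real.log (ℓ + Real.exp 1) ^ 2)⁻¹ := by
  have := one_le_log_add_exp ℓ.cast_nonneg
  rw [levelWeight]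
  field_simp

lemma succ_mul_levelWeight_sq_antitone :
    Antitone fun ℓ : ℕ => ((ℓ : ℝ) + 1) * levelWeight ℓ ^ 2 := by
  intro m n h
  have h' : (m : ℝ) ≤ n := by exact_mod_cast h
  have := one_le_log_add_exp m.cast_nonneg
  simp only [succ_mul_levelWeight_sq]
  gcongr

lemma summable_succ_mul_levelWeight_sq :
    Summable fun ℓ : ℕ => ((ℓ : ℝ) + 1) * levelWeight ℓ ^ 2 := by
  rw [← summable_condensed_iff_of_nonneg (fun ℓ => by have := levelWeight_pos ℓ; positivity)
    fun m n _ h => succ_mul_levelWeight_sq_antitone h]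
  have hmaj : Summable fun k : ℕ => 9 * (((k + 1 : ℕ) : ℝ) ^ 2)⁻¹ :=
    ((summable_nat_add_iff 1).mpr (Real.summable_nat_pow_inv.mpr one_lt_two)).mul_left 9
  refine hmaj.of_nonneg_of_le (fun k => by have := levelWeight_pos (2 ^ k); positivity)
    fun k => ?_
  have hlog := le_log_two_pow_add_exp k
  have hpos : 0 < Real.log (2 ^ k + Real.exp 1) := by linarith [(k.cast_nonneg : (0 : ℝ) ≤ k)]
  beta_reduce
  rw [succ_mul_levelWeight_sq]
  push_cast
  rw [← div_eq_mul_inv, div_le_iff₀ (by positivity)]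
  calc (2 : ℝ) ^ k ≤ 9 * (((k : ℝ) + 1) ^ 2)⁻¹ * ((2 ^ k + 1) * ((k + 1) / 3) ^ 2) := by
        field_simp; linarith
    _ ≤ _ := by gcongr

lemma sq_sqrt_inv_two_pow (m : ℕ) : (√2⁻¹ ^ m) ^ 2 = 2⁻¹ ^ m := by
  rw [← pow_mul, mul_comm, pow_mul, Real.sq_sqrt (by norm_num)]

lemma sqrt_inv_two_lt_one : √2⁻¹ < 1 := by
  rw [Real.sqrt_lt' one_pos]
  norm_num

lemma inv_one_sub_sqrt_inv_two_le : (1 - √2⁻¹)⁻¹ ≤ 4 := by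
  have : √2⁻¹ ≤ 3 / 4 := by rw [Real.sqrt_le_left (by norm_num)]; norm_num
  rw [inv_le_comm₀ (by linarith) (by norm_num)]
  linarith

def dyadicSeries (c : ℕ → ℕ → ℂ) (t : UnitIco) : ℂ :=
  ∑' ℓ : ℕ, ∑ k ∈ Icc 1 (2 ^ ℓ), c ℓ k * dyadicChi ℓ k t

lemma mem_F16_iff {f : UnitIco → ℂ} :
    f ∈ F16 ↔ ∃ c : ℕ → ℕ → ℂ,
      (∀ ℓ, ∑ k ∈ Icc 1 (2 ^ ℓ), ‖c ℓ k‖ ^ 2 ≤ levelWeight ℓ ^ 2) ∧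
      {q : ℕ × ℕ | c q.1 q.2 ≠ 0}.Finite ∧ f = dyadicSeries c := by
  simp only [F16, Set.mem_ofPred_eq, rpow_neg_two_mul_rpow_neg_two_eq_levelWeight_sq]
  rfl

lemma exists_forall_ge_eq_zero {c : ℕ → ℕ → ℂ} (hc : {q : ℕ × ℕ | c q.1 q.2 ≠ 0}.Finite) :
    ∃ M, ∀ ℓ, M ≤ ℓ → ∀ k, c ℓ k = 0 := by
  obtain ⟨M, hM⟩ := (hc.image Prod.fst).bddAbove
  refine ⟨M + 1, fun ℓ hℓ k => ?_⟩
  by_contra h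
  have := hM ⟨(ℓ, k), h, rfl⟩
  omega

lemma dyadicSeries_eq_sum {c : ℕ → ℕ → ℂ} {M : ℕ} (hM : ∀ ℓ, M ≤ ℓ → ∀ k, c ℓ k = 0)
    (t : UnitIco) : dyadicSeries c t = ∑ ℓ ∈ range M, c ℓ (dyadicIdx ℓ t + 1) := by
  rw [dyadicSeries, tsum_eq_sum fun ℓ hℓ => ?_]
  · exact sum_congr rfl fun ℓ _ => sum_Icc_mul_dyadicChi ℓ (c ℓ) t
  · simp [hM ℓ (not_lt.mp (mem_range.not.mp hℓ))]

lemma eLpNorm_levelBlock_le {ℓ : ℕ} {d : ℕ → ℂ}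
    (hd : ∑ k ∈ Icc 1 (2 ^ ℓ), ‖d k‖ ^ 2 ≤ levelWeight ℓ ^ 2) :
    eLpNorm (fun t => d (dyadicIdx ℓ t + 1)) 2 μ01 ≤
      ENNReal.ofReal (levelWeight ℓ * √2⁻¹ ^ ℓ) := by
  have hshift : ∑ j ∈ range (2 ^ ℓ), ‖d (j + 1)‖ ^ 2 = ∑ k ∈ Icc 1 (2 ^ ℓ), ‖d k‖ ^ 2 := by
    rw [range_eq_Ico, sum_Ico_add' (fun k => ‖d k‖ ^ 2), Ico_add_one_right_eq_Icc]
  rw [← ENNReal.pow_le_pow_left_iff two_ne_zero, ← ENNReal.ofReal_pow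
    (mul_nonneg (levelWeight_pos ℓ).le (by positivity))]
  refine (eLpNorm_comp_dyadicIdx_sq_le ℓ fun j => d (j + 1)).trans (ENNReal.ofReal_le_ofReal ?_)
  rw [hshift, mul_pow, sq_sqrt_inv_two_pow]
  gcongr

lemma kolW_le {D : Type*} [MeasurableSpace D] {μ : Measure D} {F : Set (D → ℂ)} {k : ℕ}
    (ℓ : Fin k → (D → ℂ) → ℂ) (φ : Fin k → D → ℂ) (hφ : ∀ i, MemLp (φ i) 2 μ) {b : ℝ≥0∞}
    (h : ∀ f ∈ F, eLpNorm (fun t => f t - ∑ i, ℓ i f * φ i t) 2 μ ≤ b) : kolW μ F k ≤ b :=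
  iInf_le_of_le ℓ <| iInf_le_of_le φ <| iInf_le_of_le hφ <| iSup₂_le h

lemma memLp_dyadicChi (ℓ k : ℕ) : MemLp (dyadicChi ℓ k) 2 μ01 := by
  have hmeas : Measurable (dyadicChi ℓ k) := by
    simp only [funext (dyadicChi_apply ℓ k)]
    exact (measurable_from_nat (f := fun j => if k = j + 1 then (1 : ℂ) else 0)).comp
      (measurable_dyadicIdx ℓ)
  refine MemLp.of_bound hmeas.aestronglyMeasurable 1 (ae_of_all _ fun t => ?_)
  rw [dyadicChi_apply]
  split_ifs <;> simp

/-- Every dyadic interval of level `ℓ ≤ L` is a union of intervals of level `L`. -/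
lemma sum_mul_dyadicChi_eq_sum_range {n L : ℕ} (hL : 2 ^ L ≤ n) (c : ℕ → ℕ → ℂ)
    (t : UnitIco) :
    ∑ i : Fin n, (∑ ℓ ∈ range (L + 1), c ℓ ((i : ℕ) / 2 ^ (L - ℓ) + 1)) *
        dyadicChi L ((i : ℕ) + 1) t =
      ∑ ℓ ∈ range (L + 1), c ℓ (dyadicIdx ℓ t + 1) := by
  simp only [dyadicChi_apply, Nat.add_right_cancel_iff, mul_ite, mul_one, mul_zero]
  rw [Fin.sum_univ_eq_sum_range (fun i => if i = dyadicIdx L t then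
      ∑ ℓ ∈ range (L + 1), c ℓ (i / 2 ^ (L - ℓ) + 1) else 0) n, sum_ite_eq',
    if_pos (mem_range.mpr ((dyadicIdx_lt L t).trans_le hL))]
  exact sum_congr rfl fun ℓ hℓ => by
    rw [dyadicIdx_eq_div (Nat.lt_succ_iff.mp (mem_range.mp hℓ))]

lemma sum_Ico_mul_pow_le_of_antitone {a : ℕ → ℝ} (ha : Antitone a) {m : ℕ} (hm : 0 ≤ a m)
    {r : ℝ} (hr0 : 0 ≤ r) (hr1 : r < 1) (M : ℕ) :
    ∑ ℓ ∈ Ico m M, a ℓ * r ^ ℓ ≤ a m * r ^ m / (1 - r) :=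
  calc ∑ ℓ ∈ Ico m M, a ℓ * r ^ ℓ ≤ ∑ ℓ ∈ Ico m M, a m * r ^ ℓ :=
        sum_le_sum fun ℓ hℓ => by gcongr; exact ha (mem_Ico.mp hℓ).1
    _ ≤ a m * (r ^ m / (1 - r)) := by
        rw [← mul_sum]; exact mul_le_mul_of_nonneg_left (geom_sum_Ico_le_of_lt_one hr0 hr1) hm
    _ = a m * r ^ m / (1 - r) := by ring

lemma eLpNorm_sum_Ico_levelBlock_le {c : ℕ → ℕ → ℂ}
    (hc : ∀ ℓ, ∑ k ∈ Icc 1 (2 ^ ℓ), ‖c ℓ k‖ ^ 2 ≤ levelWeight ℓ ^ 2) (m M : ℕ) :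
    eLpNorm (fun t => ∑ ℓ ∈ Ico m M, c ℓ (dyadicIdx ℓ t + 1)) 2 μ01 ≤
      ENNReal.ofReal (levelWeight m * √2⁻¹ ^ m / (1 - √2⁻¹)) := by
  rw [← sum_fn]
  refine (eLpNorm_sum_le (fun ℓ _ => (measurable_from_nat.comp
    ((measurable_dyadicIdx ℓ).add_const 1)).aestronglyMeasurable) one_le_two).trans ?_
  refine (sum_le_sum fun ℓ _ => eLpNorm_levelBlock_le (hc ℓ)).trans ?_
  rw [← ENNReal.ofReal_sum_of_nonneg fun ℓ _ =>
    mul_nonneg (levelWeight_pos ℓ).le (by positivity)]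
  exact ENNReal.ofReal_le_ofReal (sum_Ico_mul_pow_le_of_antitone levelWeight_antitone
    (levelWeight_pos m).le (by positivity) sqrt_inv_two_lt_one M)

lemma kolW_F16_le {n L : ℕ} (hL : 2 ^ L ≤ n) :
    kolW μ01 F16 n ≤
      ENNReal.ofReal (levelWeight (L + 1) * √2⁻¹ ^ (L + 1) / (1 - √2⁻¹)) := by
  choose! c hc hfin hf using fun f (hf : f ∈ F16) => mem_F16_iff.mp hf
  refine kolW_le (fun i f => ∑ ℓ ∈ range (L + 1), c f ℓ ((i : ℕ) / 2 ^ (L - ℓ) + 1))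
    (fun i => dyadicChi L ((i : ℕ) + 1)) (fun i => memLp_dyadicChi _ _) fun f hfF => ?_
  obtain ⟨M, hM⟩ := exists_forall_ge_eq_zero (hfin f hfF)
  have hM' : ∀ ℓ, max M (L + 1) ≤ ℓ → ∀ k, c f ℓ k = 0 :=
    fun ℓ hℓ => hM ℓ ((le_max_left _ _).trans hℓ)
  have herr : (fun t => f t - ∑ i : Fin n,
      (∑ ℓ ∈ range (L + 1), c f ℓ ((i : ℕ) / 2 ^ (L - ℓ) + 1)) * dyadicChi L ((i : ℕ) + 1) t) =
      fun t => ∑ ℓ ∈ Ico (L + 1) (max M (L + 1)), c f ℓ (dyadicIdx ℓ t + 1) := by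
    ext t
    rw [sum_mul_dyadicChi_eq_sum_range hL, congrFun (hf f hfF) t, dyadicSeries_eq_sum hM',
      sum_Ico_eq_sub _ (le_max_right _ _)]
  rw [herr]
  exact eLpNorm_sum_Ico_levelBlock_le (hc f hfF) _ _

lemma sqrt_inv_two_pow_le_rpow {n m : ℕ} (hn : 0 < n) (h : n ≤ 2 ^ m) :
    √2⁻¹ ^ m ≤ (n : ℝ) ^ (-(1 / 2) : ℝ) := by
  have h' : (n : ℝ) ≤ 2 ^ m := by exact_mod_cast h
  rw [Real.rpow_neg n.cast_nonneg, ← Real.inv_rpow n.cast_nonneg, ← Real.sqrt_eq_rpow,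
    Real.le_sqrt (by positivity) (by positivity), sq_sqrt_inv_two_pow, inv_pow]
  exact inv_anti₀ (by exact_mod_cast hn) h'

lemma levelWeight_le_inv_log_mul_inv_log_log {n m : ℕ} (hn : 3 ≤ n) (h : n ≤ 2 ^ m) :
    levelWeight m ≤ (Real.log n)⁻¹ * (Real.log (Real.log n))⁻¹ := by
  have hn' : (3 : ℝ) ≤ n := by exact_mod_cast hn
  have hlog_gt : 1 < Real.log n := by
    rw [Real.lt_log_iff_exp_lt (by linarith)]
    linarith [Real.exp_one_lt_d9]
  have hlog_le : Real.log n ≤ m := by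
    calc Real.log n ≤ Real.log (2 ^ m) := Real.log_le_log (by linarith) (by exact_mod_cast h)
      _ = m * Real.log 2 := by rw [Real.log_pow]
      _ ≤ m := mul_le_of_le_one_right m.cast_nonneg (Real.log_two_lt_d9.le.trans (by norm_num))
  have hloglog : 0 < Real.log (Real.log n) := Real.log_pos hlog_gt
  have := one_le_log_add_exp m.cast_nonneg
  rw [levelWeight, mul_inv]
  gcongr <;> linarith [Real.exp_pos 1]

lemma kolW_F16_le_of_three_le {n : ℕ} (hn : 3 ≤ n) :
    kolW μ01 F16 n ≤ ENNReal.ofReal (4 * (n : ℝ) ^ (-(1 / 2) : ℝ) *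
      (Real.log n)⁻¹ * (Real.log (Real.log n))⁻¹) := by
  have hlt : n < 2 ^ (Nat.log 2 n + 1) := Nat.lt_pow_succ_log_self one_lt_two n
  refine (kolW_F16_le (Nat.pow_log_le_self 2 (by omega))).trans (ENNReal.ofReal_le_ofReal ?_)
  calc levelWeight (Nat.log 2 n + 1) * √2⁻¹ ^ (Nat.log 2 n + 1) / (1 - √2⁻¹)
      = (1 - √2⁻¹)⁻¹ * √2⁻¹ ^ (Nat.log 2 n + 1) * levelWeight (Nat.log 2 n + 1) := by ring
    _ ≤ 4 * (n : ℝ) ^ (-(1 / 2) : ℝ) * ((Real.log n)⁻¹ * (Real.log (Real.log n))⁻¹) := by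
        have := levelWeight_pos (Nat.log 2 n + 1)
        gcongr
        · exact inv_one_sub_sqrt_inv_two_le
        · exact sqrt_inv_two_pow_le_rpow (by omega) hlt.le
        · exact levelWeight_le_inv_log_mul_inv_log_log hn hlt.le
    _ = _ := by ring

lemma summable_comp_log_two_of_antitone {u : ℕ → ℝ} (hu : Antitone u) (hu0 : ∀ m, 0 ≤ u m)
    (hsum : Summable fun k => (2 : ℝ) ^ k * u k) : Summable fun n => u (Nat.log 2 n) := by
  rw [← summable_condensed_iff_of_nonneg (fun n => hu0 _)
    fun m n _ h => hu (Nat.log_mono_right h)]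
  simpa [Nat.log_pow one_lt_two] using hsum

lemma kolW_F16_sq_mul_log_le (n : ℕ) :
    kolW μ01 F16 n ^ 2 * ENNReal.ofReal (Real.log n) ≤ ENNReal.ofReal
      (16 * ((((Nat.log 2 n + 1 : ℕ) : ℝ) + 1) * levelWeight (Nat.log 2 n + 1) ^ 2) *
        2⁻¹ ^ (Nat.log 2 n + 1)) := by
  rcases Nat.eq_zero_or_pos n with rfl | hn
  · simp
  set m := Nat.log 2 n + 1
  have hlt : n < 2 ^ m := Nat.lt_pow_succ_log_self one_lt_two n
  have hlog : Real.log n ≤ (m : ℝ) + 1 := by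
    calc Real.log n ≤ Real.log (2 ^ m) := Real.log_le_log (by positivity) (by exact_mod_cast hlt.le)
      _ = m * Real.log 2 := by rw [Real.log_pow]
      _ ≤ m + 1 := by nlinarith [Real.log_two_lt_d9, (m.cast_nonneg : (0 : ℝ) ≤ m)]
  have hw := levelWeight_pos m
  have hτ : 0 ≤ levelWeight m * √2⁻¹ ^ m / (1 - √2⁻¹) :=
    div_nonneg (by positivity) (by linarith [sqrt_inv_two_lt_one])
  calc kolW μ01 F16 n ^ 2 * ENNReal.ofReal (Real.log n)
      ≤ ENNReal.ofReal (levelWeight m * √2⁻¹ ^ m / (1 - √2⁻¹)) ^ 2 *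
          ENNReal.ofReal ((m : ℝ) + 1) := by
        gcongr
        exact kolW_F16_le (Nat.pow_log_le_self 2 hn.ne')
    _ = ENNReal.ofReal (((1 - √2⁻¹)⁻¹) ^ 2 * (((m : ℝ) + 1) * levelWeight m ^ 2) * 2⁻¹ ^ m) := by
        rw [← ENNReal.ofReal_pow hτ, ← ENNReal.ofReal_mul (by positivity), ← sq_sqrt_inv_two_pow]
        ring_nf
    _ ≤ _ := by
        gcongr
        nlinarith [inv_one_sub_sqrt_inv_two_le,
          inv_pos.mpr (by linarith [sqrt_inv_two_lt_one] : (0 : ℝ) < 1 - √2⁻¹)]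

lemma tsum_kolW_F16_sq_mul_log_ne_top :
    ∑' n : ℕ, kolW μ01 F16 n ^ 2 * ENNReal.ofReal (Real.log n) ≠ ∞ := by
  set u : ℕ → ℝ := fun L => 16 * ((((L + 1 : ℕ) : ℝ) + 1) * levelWeight (L + 1) ^ 2) *
    2⁻¹ ^ (L + 1)
  have hu0 : ∀ L, 0 ≤ u L := fun L => by have := levelWeight_pos (L + 1); positivity
  have hu : Antitone u := fun a b h => by
    have hw : ∀ L, 0 ≤ (((L + 1 : ℕ) : ℝ) + 1) * levelWeight (L + 1) ^ 2 :=
      fun L => by have := levelWeight_pos (L + 1); positivity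
    exact mul_le_mul (mul_le_mul_of_nonneg_left
      (succ_mul_levelWeight_sq_antitone (Nat.succ_le_succ h)) (by norm_num))
      (pow_le_pow_of_le_one (by norm_num) (by norm_num) (Nat.succ_le_succ h))
      (by positivity) (mul_nonneg (by norm_num) (hw a))
  have hsum : Summable fun k => (2 : ℝ) ^ k * u k := by
    refine ((summable_nat_add_iff 1).mpr summable_succ_mul_levelWeight_sq).mul_left 8
      |>.congr fun k => ?_
    simp only [u, pow_succ, inv_pow]
    field_simp
    ring
  refine ne_top_of_le_ne_top ?_ (ENNReal.tsum_le_tsum kolW_F16_sq_mul_log_le)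
  rw [← ENNReal.ofReal_tsum_of_nonneg (fun n => hu0 _)
    (summable_comp_log_two_of_antitone hu hu0 hsum)]
  exact ENNReal.ofReal_ne_top

lemma le_sampNum {D : Type*} [MeasurableSpace D] {μ : Measure D} {F : Set (D → ℂ)} {n : ℕ}
    {b : ℝ≥0∞} (h : ∀ x : Fin n → D, b ≤ ⨆ f ∈ {f ∈ F | ∀ i, f (x i) = 0}, eLpNorm f 2 μ) :
    b ≤ sampNum μ F n := by
  refine le_iInf fun x => le_iInf fun φ => le_iInf fun _ => (h x).trans (iSup₂_le fun f hf => ?_)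
  have herr : (fun t => f t - ∑ i, f (x i) * φ i t) = f := by
    ext t; simp [hf.2]
  exact le_iSup₂_of_le f hf.1 (by rw [herr])

lemma one_le_eLpNorm_add_measure {α : Type*} [MeasurableSpace α] {μ : Measure α}
    [IsProbabilityMeasure μ] {f : α → ℂ} {s : Set α} (hs : MeasurableSet s)
    (hf : ∀ t ∉ s, f t = 1) : 1 ≤ eLpNorm f 2 μ + μ s := by
  have hind : eLpNorm (sᶜ.indicator fun _ => (1 : ℂ)) 2 μ ≤ eLpNorm f 2 μ := by
    refine eLpNorm_mono fun t => ?_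
    by_cases ht : t ∈ s
    · simp [ht]
    · simp [ht, hf t ht]
  rw [eLpNorm_indicator_const hs.compl two_ne_zero ENNReal.ofNat_ne_top, enorm_one, one_mul]
    at hind
  calc (1 : ℝ≥0∞) = μ sᶜ + μ s := by rw [add_comm, measure_add_measure_compl hs, measure_univ]
    _ ≤ μ sᶜ ^ (1 / (2 : ℝ≥0∞).toReal) + μ s := by
        gcongr
        conv_lhs => rw [← ENNReal.rpow_one (μ sᶜ)]
        exact ENNReal.rpow_le_rpow_of_exponent_ge prob_le_one (by norm_num)
    _ ≤ eLpNorm f 2 μ + μ s := by gcongr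

lemma levelWeight_zero : levelWeight 0 = 1 := by
  simp [levelWeight]

lemma exists_le_sum_Ico_levelWeight (L₀ : ℕ) (C : ℝ) :
    ∃ M, L₀ < M ∧ C ≤ ∑ ℓ ∈ Ico L₀ M, levelWeight ℓ := by
  have htend := (not_summable_iff_tendsto_nat_atTop_of_nonneg
    fun ℓ => (levelWeight_pos ℓ).le).mp not_summable_levelWeight
  obtain ⟨M, hM, hLM⟩ := ((htend.eventually_ge_atTop (C + ∑ ℓ ∈ range L₀, levelWeight ℓ)).and
    (Filter.eventually_gt_atTop L₀)).exists
  refine ⟨M, hLM, ?_⟩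
  rw [sum_Ico_eq_sub _ hLM.le]
  linarith

open Classical in
def vanishingCoeff {n : ℕ} (x : Fin n → UnitIco) (L₀ M ℓ k : ℕ) : ℂ :=
  if ℓ = 0 ∧ k = 1 then 1
  else if ℓ ∈ Ico L₀ M ∧ ∃ i, k = dyadicIdx ℓ (x i) + 1 then
    -(levelWeight ℓ / ∑ j ∈ Ico L₀ M, levelWeight j : ℝ)
  else 0

lemma sum_norm_vanishingCoeff_sq_le {n : ℕ} (x : Fin n → UnitIco) {L₀ M : ℕ}
    (hT : √n ≤ ∑ j ∈ Ico L₀ M, levelWeight j) (ℓ : ℕ) :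
    ∑ k ∈ Icc 1 (2 ^ ℓ), ‖vanishingCoeff x L₀ M ℓ k‖ ^ 2 ≤ levelWeight ℓ ^ 2 := by
  rcases eq_or_ne ℓ 0 with rfl | hℓ
  · simp [vanishingCoeff, levelWeight_zero]
  set T := ∑ j ∈ Ico L₀ M, levelWeight j
  set hits := univ.image fun i => dyadicIdx ℓ (x i) + 1
  have hterm : ∀ k, ‖vanishingCoeff x L₀ M ℓ k‖ ^ 2 ≤
      if k ∈ hits then (levelWeight ℓ / T) ^ 2 else 0 := by
    intro k
    by_cases hk : k ∈ hits
    · simp only [vanishingCoeff, hℓ, false_and, if_false, if_pos hk]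
      split_ifs
      · rw [norm_neg, Complex.norm_real, Real.norm_eq_abs, sq_abs]
      · rw [norm_zero, zero_pow two_ne_zero]
        positivity
    · have : ¬ ∃ i, k = dyadicIdx ℓ (x i) + 1 := by simpa [hits, eq_comm] using hk
      simp [vanishingCoeff, hℓ, this, hk]
  have hnT : (n : ℝ) ≤ T ^ 2 :=
    (Real.sqrt_le_left ((Real.sqrt_nonneg _).trans hT)).mp hT
  calc ∑ k ∈ Icc 1 (2 ^ ℓ), ‖vanishingCoeff x L₀ M ℓ k‖ ^ 2
      ≤ ∑ k ∈ Icc 1 (2 ^ ℓ), if k ∈ hits then (levelWeight ℓ / T) ^ 2 else 0 :=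
        sum_le_sum fun k _ => hterm k
    _ ≤ ∑ k ∈ hits, (levelWeight ℓ / T) ^ 2 := by
        rw [sum_ite_mem]
        exact sum_le_sum_of_subset_of_nonneg inter_subset_right fun _ _ _ => by positivity
    _ ≤ n * (levelWeight ℓ / T) ^ 2 := by
        rw [sum_const, nsmul_eq_mul]
        gcongr
        exact_mod_cast card_image_le.trans (card_fin n).le
    _ ≤ levelWeight ℓ ^ 2 := by
        rw [div_pow, mul_div_left_comm]
        exact mul_le_of_le_one_right (sq_nonneg _) (div_le_one_of_le₀ hnT (sq_nonneg _))

lemma finite_vanishingCoeff_ne_zero {n : ℕ} (x : Fin n → UnitIco) (L₀ M : ℕ) :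
    {q : ℕ × ℕ | vanishingCoeff x L₀ M q.1 q.2 ≠ 0}.Finite := by
  refine ((Set.finite_Iic M).prod (Set.finite_Iic (2 ^ M))).subset fun ⟨ℓ, k⟩ hq => ?_
  simp only [Set.mem_ofPred_eq, vanishingCoeff] at hq
  split_ifs at hq with h0 h1
  · exact ⟨by simp [h0.1], by simp [h0.2, Nat.one_le_two_pow]⟩
  · obtain ⟨hℓ, i, rfl⟩ := h1
    have := dyadicIdx_lt ℓ (x i)
    have := Nat.pow_le_pow_right two_pos (mem_Ico.mp hℓ).2.le
    exact ⟨(mem_Ico.mp hℓ).2.le, by simp only [Set.mem_Iic]; omega⟩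
  · exact absurd rfl hq

lemma dyadicSeries_vanishingCoeff {n : ℕ} (x : Fin n → UnitIco) {L₀ M : ℕ} (hL₀ : 1 ≤ L₀)
    (hM : L₀ ≤ M) (t : UnitIco) :
    dyadicSeries (vanishingCoeff x L₀ M) t = 1 - ∑ ℓ ∈ Ico L₀ M,
      ((if ∃ i, dyadicIdx ℓ t = dyadicIdx ℓ (x i) then
        levelWeight ℓ / ∑ j ∈ Ico L₀ M, levelWeight j else 0 : ℝ) : ℂ) := by
  have hzero : ∀ ℓ, M ≤ ℓ → ∀ k, vanishingCoeff x L₀ M ℓ k = 0 := fun ℓ hℓ k => by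
    simp [vanishingCoeff, show ℓ ≠ 0 by omega, show ¬ ℓ < M by omega]
  have hterm : ∀ ℓ ∈ range M, vanishingCoeff x L₀ M ℓ (dyadicIdx ℓ t + 1) =
      (if ℓ = 0 then 1 else 0) - if ℓ ∈ Ico L₀ M then
        ((if ∃ i, dyadicIdx ℓ t = dyadicIdx ℓ (x i) then
          levelWeight ℓ / ∑ j ∈ Ico L₀ M, levelWeight j else 0 : ℝ) : ℂ) else 0 := by
    intro ℓ _
    rcases eq_or_ne ℓ 0 with rfl | hℓ
    · simp [vanishingCoeff, dyadicIdx_zero, show ¬ L₀ ≤ 0 by omega]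
    · by_cases hI : ℓ ∈ Ico L₀ M <;> by_cases hP : ∃ i, dyadicIdx ℓ t = dyadicIdx ℓ (x i) <;>
        simp [vanishingCoeff, hℓ, hI, hP]
  rw [dyadicSeries_eq_sum hzero, sum_congr rfl hterm, sum_sub_distrib, sum_ite_eq',
    if_pos (mem_range.mpr (by omega)), sum_ite_mem,
    inter_eq_right.mpr (range_eq_Ico M ▸ Ico_subset_Ico_left (Nat.zero_le _))]

def pointCells {n : ℕ} (x : Fin n → UnitIco) (L₀ M : ℕ) : Set UnitIco :=
  ⋃ ℓ ∈ Ico L₀ M, ⋃ i, {t | dyadicIdx ℓ t = dyadicIdx ℓ (x i)}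

lemma measurableSet_pointCells {n : ℕ} (x : Fin n → UnitIco) (L₀ M : ℕ) :
    MeasurableSet (pointCells x L₀ M) :=
  MeasurableSet.biUnion (Set.to_countable _) fun ℓ _ =>
    MeasurableSet.iUnion fun _ => measurable_dyadicIdx ℓ (measurableSet_singleton _)

lemma μ01_pointCells_le {n : ℕ} (x : Fin n → UnitIco) (L₀ M : ℕ) :
    μ01 (pointCells x L₀ M) ≤ ENNReal.ofReal (2 * n * 2⁻¹ ^ L₀) :=
  calc μ01 (pointCells x L₀ M)
      ≤ ∑ ℓ ∈ Ico L₀ M, ∑ i, μ01 {t | dyadicIdx ℓ t = dyadicIdx ℓ (x i)} :=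
        (measure_biUnion_finset_le _ _).trans (sum_le_sum fun ℓ _ => measure_iUnion_fintype_le _ _)
    _ ≤ ∑ ℓ ∈ Ico L₀ M, ∑ _i : Fin n, ENNReal.ofReal (2⁻¹ ^ ℓ) := by
        gcongr
        exact μ01_dyadicIdx_eq_le _ _
    _ = ENNReal.ofReal (n * ∑ ℓ ∈ Ico L₀ M, 2⁻¹ ^ ℓ) := by
        rw [mul_sum, ENNReal.ofReal_sum_of_nonneg fun _ _ => by positivity]
        refine sum_congr rfl fun ℓ _ => ?_
        rw [sum_const, card_univ, Fintype.card_fin, nsmul_eq_mul, ENNReal.ofReal_mul (by positivity),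
          ENNReal.ofReal_natCast]
    _ ≤ ENNReal.ofReal (2 * n * 2⁻¹ ^ L₀) := by
        refine ENNReal.ofReal_le_ofReal ?_
        calc (n : ℝ) * ∑ ℓ ∈ Ico L₀ M, 2⁻¹ ^ ℓ ≤ n * (2⁻¹ ^ L₀ / (1 - 2⁻¹)) := by
              gcongr
              exact geom_sum_Ico_le_of_lt_one (by norm_num) (by norm_num)
          _ = 2 * n * 2⁻¹ ^ L₀ := by ring

lemma dyadicSeries_vanishingCoeff_apply_point {n : ℕ} (x : Fin n → UnitIco) {L₀ M : ℕ}
    (hL₀ : 1 ≤ L₀) (hM : L₀ < M) (i : Fin n) :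
    dyadicSeries (vanishingCoeff x L₀ M) (x i) = 0 := by
  have hT0 : 0 < ∑ j ∈ Ico L₀ M, levelWeight j :=
    sum_pos (fun j _ => levelWeight_pos j) (nonempty_Ico.mpr hM)
  have hall : ∀ ℓ, ∃ i', dyadicIdx ℓ (x i) = dyadicIdx ℓ (x i') := fun ℓ => ⟨i, rfl⟩
  rw [dyadicSeries_vanishingCoeff x hL₀ hM.le, ← Complex.ofReal_sum]
  simp only [hall, if_true]
  rw [← sum_div, div_self hT0.ne', Complex.ofReal_one, sub_self]

lemma dyadicSeries_vanishingCoeff_of_notMem {n : ℕ} (x : Fin n → UnitIco) {L₀ M : ℕ}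
    (hL₀ : 1 ≤ L₀) (hM : L₀ ≤ M) {t : UnitIco} (ht : t ∉ pointCells x L₀ M) :
    dyadicSeries (vanishingCoeff x L₀ M) t = 1 := by
  simp only [pointCells, Set.mem_iUnion, Set.mem_ofPred_eq, not_exists] at ht
  rw [dyadicSeries_vanishingCoeff x hL₀ hM, sum_eq_zero fun ℓ hℓ => by
    rw [if_neg (not_exists.mpr (ht ℓ hℓ)), Complex.ofReal_zero], sub_zero]

lemma exists_mem_F16_vanishing {n : ℕ} (x : Fin n → UnitIco) {δ : ℝ} (hδ : 0 < δ) :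
    ∃ f ∈ F16, (∀ i, f (x i) = 0) ∧
      ∃ s, MeasurableSet s ∧ μ01 s ≤ ENNReal.ofReal δ ∧ ∀ t ∉ s, f t = 1 := by
  obtain ⟨L, hL⟩ := exists_pow_lt_of_lt_one (show 0 < δ / (n + 1) by positivity)
    (show (2⁻¹ : ℝ) < 1 by norm_num)
  rw [lt_div_iff₀ (by positivity)] at hL
  obtain ⟨M, hLM, hT⟩ := exists_le_sum_Ico_levelWeight (L + 1) √n
  have hδ' : 2 * n * (2 : ℝ)⁻¹ ^ (L + 1) ≤ δ := by
    rw [pow_succ]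
    nlinarith [pow_nonneg (show (0 : ℝ) ≤ 2⁻¹ by norm_num) L]
  exact ⟨_, mem_F16_iff.mpr ⟨_, sum_norm_vanishingCoeff_sq_le x hT,
    finite_vanishingCoeff_ne_zero x _ _, rfl⟩,
    dyadicSeries_vanishingCoeff_apply_point x (Nat.le_add_left 1 L) hLM,
    _, measurableSet_pointCells x _ _, (μ01_pointCells_le x _ _).trans (ENNReal.ofReal_le_ofReal hδ'),
    fun t => dyadicSeries_vanishingCoeff_of_notMem x (Nat.le_add_left 1 L) hLM.le⟩

lemma one_le_sampNum_F16 (n : ℕ) : 1 ≤ sampNum μ01 F16 n := by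
  refine le_sampNum fun x => ENNReal.le_of_forall_pos_le_add fun ε hε _ => ?_
  obtain ⟨f, hfF, hfx, s, hs, hμs, hf1⟩ := exists_mem_F16_vanishing x hε
  calc (1 : ℝ≥0∞) ≤ eLpNorm f 2 μ01 + μ01 s := one_le_eLpNorm_add_measure hs hf1
    _ ≤ (⨆ f ∈ {f ∈ F16 | ∀ i, f (x i) = 0}, eLpNorm f 2 μ01) + ε := by
        gcongr
        · exact le_iSup₂_of_le f ⟨hfF, hfx⟩ le_rfl
        · simpa using hμs

theorem statement16 :
    -- (i) decay of the Kolmogorov widths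
    (∃ C : ℝ, 0 < C ∧ ∃ N : ℕ, ∀ n : ℕ, N ≤ n → 2 ≤ n →
      kolW μ01 F16 n ≤
        ENNReal.ofReal (C * (n : ℝ) ^ (-(1 / 2) : ℝ) *
          (Real.log n)⁻¹ * (Real.log (Real.log n))⁻¹)) ∧
    -- in particular `(d_n(F) (log n)^{1/2})_n ∈ ℓ₂`
    (∑' n : ℕ, kolW μ01 F16 n ^ 2 * ENNReal.ofReal (Real.log n) ≠ ∞) ∧
    -- (ii) the sampling numbers do not tend to zero
    (∀ n : ℕ, 1 ≤ sampNum μ01 F16 n) :=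
  ⟨⟨4, by norm_num, 3, fun _ hn _ => kolW_F16_le_of_three_le hn⟩,
    tsum_kolW_F16_sq_mul_log_ne_top, one_le_sampNum_F16⟩

end
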